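/- Consider a surjective pullback diagram of unital rings: two extensions 0 → I → R →γ B → 0 and 0 → I → A →α C → 0 together with maps δ : R → A and β : B → C such that δ restricts to the identity on I, α∘δ = β∘γ, and the square is a pullback. If β(B) is primely embedded in C (i.e., for idempotents e, f ∈ β(B), e ⊥ f in β(B) implies e ⊥ f in C), then δ(R) is primely embedded in A: any two centrally orthogonal idempotents p, q of R have δ(p) ⊥ δ(q) in A. -/
import Mathlib


section
variable {R A B C : Type*} [Ring R] [Ring A] [Ring B] [Ring C]

/-- `x` and `y` are centrally orthogonal: `xSy = 0 = ySx`. -/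
def CentOrth {S : Type*} [Ring S] (x y : S) : Prop :=
  ∀ r : S, x * r * y = 0 ∧ y * r * x = 0

/-- In a surjective pullback diagram of extensions `0 → I → R → B → 0` and
`0 → I → A → C → 0`, if `β(B)` is primely embedded in `C`, then `δ(R)` is primely
embedded in `A`: centrally orthogonal idempotents of `R` map to centrally orthogonal
idempotents of `A`. -/
theorem pullback_primely_embedded
    (γ : R →+* B) (δ : R →+* A) (α : A →+* C) (β : B →+* C)
    (hγ : Function.Surjective γ) (hα : Function.Surjective α)
    (hcomm : α.comp δ = β.comp γ)
    (hinj : ∀ x : R, γ x = 0 → δ x = 0 → x = 0)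
    (hker : ∀ a : A, α a = 0 ↔ ∃ x : R, γ x = 0 ∧ δ x = a)
    (hprime : ∀ e f : C, e ∈ Set.range β → f ∈ Set.range β →
      e * e = e → f * f = f →
      (∀ b : B, e * β b * f = 0 ∧ f * β b * e = 0) →
      ∀ c : C, e * c * f = 0 ∧ f * c * e = 0)
    (p q : R) (hp : p * p = p) (hq : q * q = q) (hpq : CentOrth p q) :
    CentOrth (δ p) (δ q) := by
  have hcomm' : ∀ r : R, α (δ r) = β (γ r) := fun r => RingHom.congr_fun hcomm r
  -- key lemma, applied symmetrically
  have key : ∀ p q : R, p * p = p → q * q = q → CentOrth p q →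
      ∀ a : A, δ p * a * δ q = 0 := by
    intro p q hp hq hpq a
    -- β(γ p) and β(γ q) are centrally orthogonal idempotents of β(B)
    have horth : ∀ b : B, β (γ p) * β b * β (γ q) = 0 ∧ β (γ q) * β b * β (γ p) = 0 := by
      intro b
      obtain ⟨r, rfl⟩ := hγ b
      constructor
      · rw [← map_mul, ← map_mul, ← map_mul, ← map_mul, (hpq r).1, map_zero, map_zero]
      · rw [← map_mul, ← map_mul, ← map_mul, ← map_mul, (hpq r).2, map_zero, map_zero]
    have hep : β (γ p) * β (γ p) = β (γ p) := by
      rw [← map_mul, ← map_mul, hp]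
    have heq : β (γ q) * β (γ q) = β (γ q) := by
      rw [← map_mul, ← map_mul, hq]
    -- so they are centrally orthogonal in C
    have hC : ∀ c : C, β (γ p) * c * β (γ q) = 0 ∧ β (γ q) * c * β (γ p) = 0 :=
      hprime _ _ ⟨γ p, rfl⟩ ⟨γ q, rfl⟩ hep heq horth
    -- hence α (δ p * a * δ q) = 0
    have hαz : α (δ p * a * δ q) = 0 := by
      rw [map_mul, map_mul, hcomm' p, hcomm' q]
      exact (hC (α a)).1
    obtain ⟨x, hγx, hδx⟩ := (hker _).mp hαz
    -- x = p * x * q, which is 0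
    have h1 : γ (x - p * x * q) = 0 := by
      rw [map_sub, map_mul, map_mul, hγx, mul_zero, zero_mul, sub_zero]
    have h2 : δ (x - p * x * q) = 0 := by
      rw [map_sub, map_mul, map_mul, hδx]
      have : δ p * (δ p * a * δ q) * δ q = δ p * a * δ q := by
        rw [← mul_assoc, ← mul_assoc, ← map_mul, hp, mul_assoc, mul_assoc, ← map_mul, hq,
          ← mul_assoc]
      rw [this, sub_self]
    have hx0 : x = p * x * q := by
      exact sub_eq_zero.mp (hinj _ h1 h2)
    rw [← hδx, hx0, (hpq x).1, map_zero]
  intro a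
  exact ⟨key p q hp hq hpq a, key q p hq hp (fun r => ⟨(hpq r).2, (hpq r).1⟩) a⟩

end
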